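/- arXiv:2412.00376 — 2 statements merged into one kernel-verified Lean document; each statement's English description precedes it below -/
import Mathlib

section
/- Let α ∈ (1,2) and β > 0. Then ∫_0^∞ [(1+z)^{−β} − 1 + βz] μ_α(dz) = β(β+1)Γ(α+β)/(Γ(α)Γ(β+2)). -/
/-!
Put `f(z) = (1+z)^{-β} - 1 + βz`. As `f(0) = f'(0) = 0`, we have `f = O(z²)` and `f' = O(z)` at `0`,
while `f = O(z)` and `f' = O(1)` at `∞`. For `1 < α < 2` this kills the boundary terms of two
integrations by parts against `z^{-1-α}`, which give
`∫₀^∞ f z^{-1-α} dz = (α(α-1))⁻¹ ∫₀^∞ β(β+1)(1+z)^{-β-2} z^{1-α} dz`.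
The substitution `z = t/(1-t)` turns the last integral into
`B(2-α, α+β) = Γ(2-α)Γ(α+β)/Γ(β+2)`.
-/

open MeasureTheory Set Real Filter Topology Asymptotics

lemma isBigO_rpow_of_eventually_norm_le {l : Filter ℝ} {g : ℝ → ℝ} {C p : ℝ}
    (hl : ∀ᶠ z in l, 0 < z) (h : ∀ᶠ z in l, ‖g z‖ ≤ C * z ^ p) : g =O[l] (· ^ p) :=
  IsBigO.of_bound C <| (hl.and h).mono fun z ⟨hz, hgz⟩ ↦ by
    rwa [Real.norm_of_nonneg (rpow_nonneg hz.le _)]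

lemma Asymptotics.IsBigO.mul_rpow {l : Filter ℝ} {g : ℝ → ℝ} {a : ℝ}
    (hg : g =O[l] (· ^ a)) (hl : ∀ᶠ z in l, 0 < z) (s : ℝ) :
    (fun z ↦ g z * z ^ s) =O[l] (· ^ (a + s)) :=
  (hg.mul (isBigO_refl (· ^ s) l)).congr' EventuallyEq.rfl
    (hl.mono fun _ hz ↦ (rpow_add hz a s).symm)

lemma integrableOn_Ioi_zero_of_isBigO_rpow {g : ℝ → ℝ} {a b : ℝ} (hg : ContinuousOn g (Ioi 0))
    (h₀ : g =O[𝓝[>] 0] (· ^ a)) (h_top : g =O[atTop] (· ^ b)) (ha : -1 < a) (hb : b < -1) :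
    IntegrableOn g (Ioi 0) := by
  rw [integrableOn_Ioi_iff_integrableAtFilter_atTop_nhdsWithin]
  refine ⟨h_top.integrableAtFilter ?_ (integrableAtFilter_rpow_atTop_iff.2 hb),
    h₀.integrableAtFilter ?_ ⟨Ioo 0 1, Ioo_mem_nhdsGT one_pos,
      (intervalIntegral.integrableOn_Ioo_rpow_iff one_pos).2 ha⟩,
    hg.locallyIntegrableOn measurableSet_Ioi⟩
  · exact ⟨Ioi 0, Ioi_mem_atTop 0, hg.aestronglyMeasurable measurableSet_Ioi⟩
  · exact ⟨Ioi 0, self_mem_nhdsWithin, hg.aestronglyMeasurable measurableSet_Ioi⟩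

lemma tendsto_nhdsGT_zero_of_isBigO_rpow {g : ℝ → ℝ} {a : ℝ} (h : g =O[𝓝[>] 0] (· ^ a))
    (ha : 0 < a) : Tendsto g (𝓝[>] 0) (𝓝 0) := by
  refine h.trans_tendsto ?_
  simpa [zero_rpow ha.ne'] using
    ((continuousAt_rpow_const 0 a (Or.inr ha.le)).tendsto).mono_left nhdsWithin_le_nhds

lemma tendsto_atTop_of_isBigO_rpow {g : ℝ → ℝ} {b : ℝ} (h : g =O[atTop] (· ^ b))
    (hb : b < 0) : Tendsto g atTop (𝓝 0) :=
  h.trans_tendsto <| by simpa using tendsto_rpow_neg_atTop (neg_pos.2 hb)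

lemma isBigO_nhdsGT_zero_rpow_add_one_of_hasDerivAt {g g' : ℝ → ℝ} {a : ℝ} (ha : 0 ≤ a)
    (hg₀ : g 0 = 0) (hg : ∀ z ∈ Ici (0 : ℝ), HasDerivAt g (g' z) z) (hg' : g' =O[𝓝[>] 0] (· ^ a)) :
    g =O[𝓝[>] 0] (· ^ (a + 1)) := by
  obtain ⟨C, hC, hbound⟩ := hg'.exists_pos
  obtain ⟨ε, hε, hsub⟩ := mem_nhdsGT_iff_exists_Ioo_subset.1 hbound.bound
  refine isBigO_rpow_of_eventually_norm_le (C := C) self_mem_nhdsWithin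
    (mem_of_superset (Ioo_mem_nhdsGT hε) fun z hz ↦ ?_)
  obtain ⟨ξ, hξ, hslope⟩ := exists_hasDerivAt_eq_slope g g' hz.1
    (fun x hx ↦ (hg x hx.1).continuousAt.continuousWithinAt) fun x hx ↦ hg x (mem_Ici.2 hx.1.le)
  rw [hg₀, sub_zero, sub_zero, eq_div_iff hz.1.ne'] at hslope
  have hξ_bound : ‖g' ξ‖ ≤ C * ξ ^ a := by
    simpa [abs_of_pos (rpow_pos_of_pos hξ.1 a)] using hsub ⟨hξ.1, hξ.2.trans hz.2⟩
  calc ‖g z‖ = ‖g' ξ‖ * z := by rw [← hslope, norm_mul, Real.norm_of_nonneg hz.1.le]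
    _ ≤ C * z ^ a * z := by
        refine mul_le_mul_of_nonneg_right (hξ_bound.trans ?_) hz.1.le
        exact mul_le_mul_of_nonneg_left (rpow_le_rpow hξ.1.le hξ.2.le ha) hC.le
    _ = C * z ^ (a + 1) := by rw [rpow_add_one hz.1.ne', mul_assoc]

theorem integral_Ioi_mul_rpow_sub_one_eq_of_isBigO {u u' : ℝ → ℝ} {s a b a' b' : ℝ} (hs : s ≠ 0)
    (hu : ∀ z ∈ Ioi (0 : ℝ), HasDerivAt u (u' z) z) (hu' : ContinuousOn u' (Ioi 0))
    (hu₀ : u =O[𝓝[>] 0] (· ^ a)) (hu_top : u =O[atTop] (· ^ b))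
    (hu'₀ : u' =O[𝓝[>] 0] (· ^ a')) (hu'_top : u' =O[atTop] (· ^ b'))
    (ha : 0 < a + s) (hb : b + s < 0) (ha' : -1 < a' + s) (hb' : b' + s < -1) :
    ∫ z in Ioi 0, u z * z ^ (s - 1) = -s⁻¹ * ∫ z in Ioi 0, u' z * z ^ s := by
  have hpos₀ : ∀ᶠ z in 𝓝[>] (0 : ℝ), 0 < z := self_mem_nhdsWithin
  have hpos_top : ∀ᶠ z in atTop, (0 : ℝ) < z := Ioi_mem_atTop 0
  have hu_cont : ContinuousOn u (Ioi 0) := fun z hz ↦ (hu z hz).continuousAt.continuousWithinAt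
  have hrpow_cont (r : ℝ) : ContinuousOn (· ^ r) (Ioi (0 : ℝ)) :=
    fun z hz ↦ (continuousAt_rpow_const z r (Or.inl (ne_of_gt hz))).continuousWithinAt
  have hv : ∀ z ∈ Ioi (0 : ℝ), HasDerivAt (fun z ↦ z ^ s / s) (z ^ (s - 1)) z := fun z hz ↦ by
    simpa [hs] using (hasDerivAt_rpow_const (p := s) (Or.inl (ne_of_gt hz))).div_const s
  have huv' : IntegrableOn (fun z ↦ u z * z ^ (s - 1)) (Ioi 0) :=
    integrableOn_Ioi_zero_of_isBigO_rpow (hu_cont.mul (hrpow_cont _))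
      (hu₀.mul_rpow hpos₀ _) (hu_top.mul_rpow hpos_top _) (by linarith) (by linarith)
  have hu'v : IntegrableOn (fun z ↦ u' z * z ^ s) (Ioi 0) :=
    integrableOn_Ioi_zero_of_isBigO_rpow (hu'.mul (hrpow_cont _))
      (hu'₀.mul_rpow hpos₀ _) (hu'_top.mul_rpow hpos_top _) ha' hb'
  have h₀ : Tendsto (u * fun z ↦ z ^ s / s) (𝓝[>] 0) (𝓝 0) := by
    simpa only [Pi.mul_def, mul_div_assoc, zero_div] using
      (tendsto_nhdsGT_zero_of_isBigO_rpow (hu₀.mul_rpow hpos₀ s) ha).div_const s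
  have h_top : Tendsto (u * fun z ↦ z ^ s / s) atTop (𝓝 0) := by
    simpa only [Pi.mul_def, mul_div_assoc, zero_div] using
      (tendsto_atTop_of_isBigO_rpow (hu_top.mul_rpow hpos_top s) hb).div_const s
  have hu'v' : IntegrableOn (u' * fun z ↦ z ^ s / s) (Ioi 0) := by
    simp only [Pi.mul_def, ← mul_div_assoc]
    exact hu'v.div_const s
  rw [integral_Ioi_mul_deriv_eq_deriv_mul hu hv huv' hu'v' h₀ h_top, sub_self, zero_sub, neg_mul,
    neg_inj, ← integral_const_mul]
  congr 1 with z
  field_simp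

lemma hasDerivAt_one_add_rpow (q : ℝ) {z : ℝ} (hz : -1 < z) :
    HasDerivAt (fun w ↦ (1 + w) ^ q) (q * (1 + z) ^ (q - 1)) z := by
  have h := (hasDerivAt_rpow_const (p := q) (Or.inl (by linarith : 1 + z ≠ 0))).comp z
    ((hasDerivAt_id z).const_add 1)
  exact h.congr_deriv (mul_one _)

section

variable (β : ℝ)

lemma hasDerivAt_one_add_rpow_neg_sub_one_add_mul {z : ℝ} (hz : -1 < z) :
    HasDerivAt (fun w ↦ (1 + w) ^ (-β) - 1 + β * w) (β - β * (1 + z) ^ (-β - 1)) z :=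
  (((hasDerivAt_one_add_rpow (-β) hz).sub_const 1).add
    ((hasDerivAt_id z).const_mul β)).congr_deriv (by ring)

lemma hasDerivAt_sub_mul_one_add_rpow {z : ℝ} (hz : -1 < z) :
    HasDerivAt (fun w ↦ β - β * (1 + w) ^ (-β - 1)) (β * (β + 1) * (1 + z) ^ (-β - 2)) z := by
  refine (((hasDerivAt_one_add_rpow (-β - 1) hz).const_mul β).const_sub β).congr_deriv ?_
  rw [show -β - 1 - 1 = -β - 2 by ring]
  ring

variable {β}

lemma isBigO_nhdsGT_zero_mul_one_add_rpow (hβ : 0 ≤ β) :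
    (fun z ↦ β * (β + 1) * (1 + z) ^ (-β - 2)) =O[𝓝[>] 0] (· ^ (0 : ℝ)) :=
  isBigO_rpow_of_eventually_norm_le (C := β * (β + 1)) self_mem_nhdsWithin <|
    eventually_mem_nhdsWithin.mono fun z (hz : 0 < z) ↦ by
      rw [rpow_zero, mul_one, norm_mul, Real.norm_of_nonneg (by positivity),
        Real.norm_of_nonneg (by positivity)]
      exact mul_le_of_le_one_right (by positivity)
        (rpow_le_one_of_one_le_of_nonpos (by linarith) (by linarith))

lemma isBigO_nhdsGT_zero_sub_mul_one_add_rpow (hβ : 0 ≤ β) :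
    (fun z ↦ β - β * (1 + z) ^ (-β - 1)) =O[𝓝[>] 0] (· ^ (1 : ℝ)) := by
  have := isBigO_nhdsGT_zero_rpow_add_one_of_hasDerivAt le_rfl (by simp)
    (fun z hz ↦ hasDerivAt_sub_mul_one_add_rpow β (by linarith [mem_Ici.1 hz]))
    (isBigO_nhdsGT_zero_mul_one_add_rpow hβ)
  rwa [zero_add] at this

lemma isBigO_nhdsGT_zero_one_add_rpow_neg_sub_one_add_mul (hβ : 0 ≤ β) :
    (fun z ↦ (1 + z) ^ (-β) - 1 + β * z) =O[𝓝[>] 0] (· ^ (2 : ℝ)) := by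
  have := isBigO_nhdsGT_zero_rpow_add_one_of_hasDerivAt zero_le_one (by simp)
    (fun z hz ↦ hasDerivAt_one_add_rpow_neg_sub_one_add_mul β (by linarith [mem_Ici.1 hz]))
    (isBigO_nhdsGT_zero_sub_mul_one_add_rpow hβ)
  rwa [one_add_one_eq_two] at this

lemma isBigO_atTop_mul_one_add_rpow (hβ : 0 ≤ β) :
    (fun z ↦ β * (β + 1) * (1 + z) ^ (-β - 2)) =O[atTop] (· ^ (-β - 2)) :=
  isBigO_rpow_of_eventually_norm_le (C := β * (β + 1)) (Ioi_mem_atTop 0) <|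
    (eventually_gt_atTop 0).mono fun z (hz : 0 < z) ↦ by
      rw [norm_mul, Real.norm_of_nonneg (by positivity), Real.norm_of_nonneg (by positivity)]
      exact mul_le_mul_of_nonneg_left (rpow_le_rpow_of_nonpos hz (by linarith) (by linarith))
        (by positivity)

lemma isBigO_atTop_sub_mul_one_add_rpow (hβ : 0 ≤ β) :
    (fun z ↦ β - β * (1 + z) ^ (-β - 1)) =O[atTop] (· ^ (0 : ℝ)) :=
  isBigO_rpow_of_eventually_norm_le (C := β) (Ioi_mem_atTop 0) <| (eventually_gt_atTop 0).mono
    fun z (hz : 0 < z) ↦ by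
      have h₀ : 0 ≤ (1 + z) ^ (-β - 1) := by positivity
      have h₁ : (1 + z) ^ (-β - 1) ≤ 1 :=
        rpow_le_one_of_one_le_of_nonpos (by linarith) (by linarith)
      rw [rpow_zero, mul_one, Real.norm_eq_abs, abs_le]
      constructor <;> nlinarith

lemma isBigO_atTop_one_add_rpow_neg_sub_one_add_mul (hβ : 0 ≤ β) :
    (fun z ↦ (1 + z) ^ (-β) - 1 + β * z) =O[atTop] (· ^ (1 : ℝ)) :=
  isBigO_rpow_of_eventually_norm_le (C := β + 1) (Ioi_mem_atTop 0) <|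
    (eventually_ge_atTop 1).mono fun z (hz : 1 ≤ z) ↦ by
      have h₀ : 0 ≤ (1 + z) ^ (-β) := by positivity
      have h₁ : (1 + z) ^ (-β) ≤ 1 := rpow_le_one_of_one_le_of_nonpos (by linarith) (by linarith)
      rw [rpow_one, Real.norm_eq_abs, abs_le]
      constructor <;> nlinarith

end

theorem integral_Ioo_rpow_mul_one_sub_rpow {a b : ℝ} (ha : 0 < a) (hb : 0 < b) :
    ∫ x in Ioo (0 : ℝ) 1, x ^ (a - 1) * (1 - x) ^ (b - 1) = Gamma a * Gamma b / Gamma (a + b) := by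
  have hbeta : Complex.betaIntegral a b
      = ↑(∫ x in (0 : ℝ)..1, x ^ (a - 1) * (1 - x) ^ (b - 1)) := by
    rw [Complex.betaIntegral, ← intervalIntegral.integral_ofReal]
    refine intervalIntegral.integral_congr fun x hx ↦ ?_
    rw [uIcc_of_le zero_le_one] at hx
    simp only [Complex.ofReal_mul, Complex.ofReal_cpow hx.1,
      Complex.ofReal_cpow (sub_nonneg.2 hx.2)]
    push_cast
    rfl
  have key := Complex.betaIntegral_eq_Gamma_mul_div a b (by simpa using ha) (by simpa using hb)
  rw [hbeta, ← Complex.ofReal_add, Complex.Gamma_ofReal, Complex.Gamma_ofReal,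
    Complex.Gamma_ofReal] at key
  rw [← integral_Ioc_eq_integral_Ioo, ← intervalIntegral.integral_of_le zero_le_one]
  exact_mod_cast key

theorem integral_Ioi_rpow_mul_one_add_rpow {a b : ℝ} (ha : 0 < a) (hb : 0 < b) :
    ∫ z in Ioi (0 : ℝ), z ^ (a - 1) * (1 + z) ^ (-(a + b)) = Gamma a * Gamma b / Gamma (a + b) := by
  set φ : ℝ → ℝ := fun t ↦ t / (1 - t)
  have himage : φ '' Ioo 0 1 = Ioi 0 := by
    ext z
    constructor
    · rintro ⟨t, ⟨ht₀, ht₁⟩, rfl⟩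
      exact div_pos ht₀ (sub_pos.2 ht₁)
    intro (hz : 0 < z)
    refine ⟨z / (1 + z), ⟨by positivity, ?_⟩, ?_⟩
    · rw [div_lt_one (by positivity)]; linarith
    · have : 1 + z ≠ 0 := by positivity
      simp only [φ]
      field_simp
      ring
  have hderiv : ∀ t ∈ Ioo (0 : ℝ) 1, HasDerivWithinAt φ ((1 - t) ^ (-2 : ℝ)) (Ioo 0 1) t := by
    rintro t ⟨-, ht₁⟩
    have hne : 1 - t ≠ 0 := (sub_pos.2 ht₁).ne'
    refine (((hasDerivAt_id t).div ((hasDerivAt_id t).const_sub 1) hne).congr_deriv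
      ?_).hasDerivWithinAt
    rw [rpow_neg (sub_pos.2 ht₁).le, rpow_two]
    simp
  have hinj : InjOn φ (Ioo 0 1) := by
    rintro t₁ ⟨-, h₁⟩ t₂ ⟨-, h₂⟩ h
    rw [div_eq_div_iff (by linarith) (by linarith)] at h
    linarith
  rw [← himage, integral_image_eq_integral_abs_deriv_smul measurableSet_Ioo hderiv hinj,
    ← integral_Ioo_rpow_mul_one_sub_rpow ha hb]
  refine setIntegral_congr_fun measurableSet_Ioo fun t ⟨ht₀, ht₁⟩ ↦ ?_
  have h₁ : 0 < 1 - t := sub_pos.2 ht₁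
  have hφ : 1 + φ t = (1 - t)⁻¹ := by
    simp only [φ]
    field_simp
    ring
  rw [smul_eq_mul, abs_of_pos (rpow_pos_of_pos h₁ _), hφ, inv_rpow h₁.le, ← rpow_neg h₁.le,
    neg_neg, div_rpow ht₀.le h₁.le, div_eq_mul_inv, ← rpow_neg h₁.le]
  have hexp : (1 - t) ^ (-2 : ℝ) * (1 - t) ^ (-(a - 1)) * (1 - t) ^ (a + b)
      = (1 - t) ^ (b - 1) := by
    rw [← rpow_add h₁, ← rpow_add h₁]
    ring_nf
  rw [← hexp]
  ring

theorem integral_one_add_rpow_neg_sub_one_add_mul_mul_rpow {α β : ℝ} (hα₁ : 1 < α) (hα₂ : α < 2)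
    (hβ : 0 ≤ β) :
    ∫ z in Ioi (0 : ℝ), ((1 + z) ^ (-β) - 1 + β * z) * z ^ (-α - 1)
      = β * (β + 1) * Gamma (2 - α) * Gamma (α + β) / (α * (α - 1) * Gamma (β + 2)) := by
  have hderiv' : ∀ z ∈ Ioi (0 : ℝ), HasDerivAt (fun w ↦ β - β * (1 + w) ^ (-β - 1))
      (β * (β + 1) * (1 + z) ^ (-β - 2)) z := fun z hz ↦
    hasDerivAt_sub_mul_one_add_rpow β (by linarith [mem_Ioi.1 hz])
  have hcont'' : ContinuousOn (fun z ↦ β * (β + 1) * (1 + z) ^ (-β - 2)) (Ioi 0) := fun z hz ↦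
    ((hasDerivAt_one_add_rpow (-β - 2) (by linarith [mem_Ioi.1 hz])).continuousAt.const_mul
      _).continuousWithinAt
  have step₁ := integral_Ioi_mul_rpow_sub_one_eq_of_isBigO (s := -α) (by linarith)
    (fun z hz ↦ hasDerivAt_one_add_rpow_neg_sub_one_add_mul β (by linarith [mem_Ioi.1 hz]))
    (fun z hz ↦ (hderiv' z hz).continuousAt.continuousWithinAt)
    (isBigO_nhdsGT_zero_one_add_rpow_neg_sub_one_add_mul hβ)
    (isBigO_atTop_one_add_rpow_neg_sub_one_add_mul hβ)
    (isBigO_nhdsGT_zero_sub_mul_one_add_rpow hβ) (isBigO_atTop_sub_mul_one_add_rpow hβ)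
    (by linarith) (by linarith) (by linarith) (by linarith)
  have step₂ := integral_Ioi_mul_rpow_sub_one_eq_of_isBigO (s := 1 - α) (by linarith)
    hderiv' hcont''
    (isBigO_nhdsGT_zero_sub_mul_one_add_rpow hβ) (isBigO_atTop_sub_mul_one_add_rpow hβ)
    (isBigO_nhdsGT_zero_mul_one_add_rpow hβ) (isBigO_atTop_mul_one_add_rpow hβ)
    (by linarith) (by linarith) (by linarith) (by linarith)
  have hbeta := integral_Ioi_rpow_mul_one_add_rpow (a := 2 - α) (b := α + β) (by linarith)
    (by linarith)
  rw [show 2 - α - 1 = 1 - α by ring, show 2 - α + (α + β) = β + 2 by ring, neg_add'] at hbeta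
  rw [show 1 - α - 1 = -α by ring] at step₂
  have hpull : ∫ z in Ioi (0 : ℝ), β * (β + 1) * (1 + z) ^ (-β - 2) * z ^ (1 - α)
      = β * (β + 1) * ∫ z in Ioi (0 : ℝ), z ^ (1 - α) * (1 + z) ^ (-β - 2) := by
    rw [← integral_const_mul]
    congr 1 with z
    ring
  have hα : α ≠ 0 := by linarith
  have hα' : α - 1 ≠ 0 := by linarith
  have hα'' : 1 - α ≠ 0 := by linarith
  have hΓ : Gamma (β + 2) ≠ 0 := (Gamma_pos_of_pos (by linarith)).ne'
  rw [step₁, step₂, hpull, hbeta]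
  field_simp
  ring

/-- Lemma 3.2, second identity: for `α ∈ (1,2)` and `β > 0`,
`∫_0^∞ [(1+z)^{−β} − 1 + βz] μ_α(dz) = β(β+1)Γ(α+β)/(Γ(α)Γ(β+2))`, where
`μ_α(dz) = (α(α−1)/(Γ(α)Γ(2−α))) z^{−1−α} dz` on `(0,∞)`. -/
theorem stable_measure_integral_two (α β : ℝ) (hα₁ : 1 < α) (hα₂ : α < 2) (hβ : 0 < β) :
    ∫ z in Ioi (0 : ℝ),
        ((1 + z) ^ (-β) - 1 + β * z) *
          (α * (α - 1) / (Real.Gamma α * Real.Gamma (2 - α)) * z ^ (-1 - α))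
      = β * (β + 1) * Real.Gamma (α + β) / (Real.Gamma α * Real.Gamma (β + 2)) := by
  have hpull : ∫ z in Ioi (0 : ℝ), ((1 + z) ^ (-β) - 1 + β * z) *
        (α * (α - 1) / (Gamma α * Gamma (2 - α)) * z ^ (-1 - α))
      = α * (α - 1) / (Gamma α * Gamma (2 - α)) *
        ∫ z in Ioi (0 : ℝ), ((1 + z) ^ (-β) - 1 + β * z) * z ^ (-α - 1) := by
    rw [← integral_const_mul]
    congr 1 with z
    rw [show -1 - α = -α - 1 by ring]
    ring
  rw [hpull, integral_one_add_rpow_neg_sub_one_add_mul_mul_rpow hα₁ hα₂ hβ.le]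
  have hα : α ≠ 0 := by linarith
  have hα' : α - 1 ≠ 0 := by linarith
  have hΓα : Gamma α ≠ 0 := (Gamma_pos_of_pos (by linarith)).ne'
  have hΓ₂ : Gamma (2 - α) ≠ 0 := (Gamma_pos_of_pos (by linarith)).ne'
  have hΓβ : Gamma (β + 2) ≠ 0 := (Gamma_pos_of_pos (by linarith)).ne'
  field_simp
end

section
/- Assume p = q = 0 and b/a < κ₂/(1 − θ₂). Then there exist constants β, ρ, σ₀, ε₀, z* > 0 and 0 < δ < β^{−1} such that for all 0 < σ < σ₀ and all x, y with 0 < x, y ≤ ε₀ and y x^{−β} ≥ z*, one has H̃_σ(x,y) > 0. -/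
/-!
Choose `β` strictly between `b / a` and `κ₂ / (1 - θ₂)`. Then `c := β a - b > 0`, and for small `σ`
the constant part `β a (1 - σ) - (1 + σ) b` of the bracket exceeds `c / 2`. On the region
`y ≥ x ^ β` the only negative term of the bracket is at most `η₂ x ^ (κ₂ - β (1 - θ₂))`, whose
exponent is positive by the other half of the choice of `β`, so it is below `c / 2` for small `x`.
Hence the bracket is positive, and the remaining terms of `H̃_σ` are positive anyway.
-/

open Real

lemma rpow_le_of_one_le_mul_rpow_neg {x y β : ℝ} (hx : 0 < x) (h : 1 ≤ y * x ^ (-β)) :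
    x ^ β ≤ y := by
  have := mul_le_mul_of_nonneg_right h (rpow_pos_of_pos hx β).le
  rwa [one_mul, mul_assoc, ← rpow_add hx, neg_add_cancel, rpow_zero, mul_one] at this

lemma rpow_mul_rpow_le_of_rpow_le {x y β s κ : ℝ} (hx : 0 < x) (hxy : x ^ β ≤ y) (hs : s ≤ 0) :
    y ^ s * x ^ κ ≤ x ^ (κ + β * s) := by
  calc y ^ s * x ^ κ ≤ (x ^ β) ^ s * x ^ κ := 
        mul_le_mul_of_nonneg_right (rpow_le_rpow_of_nonpos (rpow_pos_of_pos hx β) hxy hs)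
          (rpow_pos_of_pos hx κ).le
    _ = x ^ (κ + β * s) := by rw [← rpow_mul hx.le, ← rpow_add hx, add_comm]

lemma half_gap_lt_of_lt {A B σ : ℝ} (hB : 0 < B) (hAB : B < A)
    (hσ : σ < (A - B) / (2 * (A + B))) :
    σ < 1 ∧ (A - B) / 2 < A * (1 - σ) - (1 + σ) * B := by
  have hσ' : σ * (A + B) < (A - B) / 2 := by
    rw [lt_div_iff₀ (by linarith)] at hσ
    linarith
  constructor <;> nlinarith

lemma Htilde_pos_of_gap {a b η₁ η₂ κ₁ κ₂ θ₁ θ₂ β ρ δ σ x y : ℝ}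
    (hb : 0 ≤ b) (hη₁ : 0 ≤ η₁) (hη₂ : 0 ≤ η₂) (hβ : 0 ≤ β) (hρ : 0 ≤ ρ) (hδ : 0 < δ)
    (hθ₂ : θ₂ ≤ 1) (hσ : σ ≤ 1) (hx : 0 < x) (hy : 0 < y) (hxy : x ^ β ≤ y)
    (hgap : η₂ * x ^ (κ₂ - β * (1 - θ₂)) < β * a * (1 - σ) - (1 + σ) * b) :
    0 < δ * (x ^ (β * δ) * y ^ (-δ)) *
          (β * a * (1 - σ) - (1 + σ) * b
            + β * η₁ * x ^ (θ₁ - 1) * y ^ κ₁ - η₂ * y ^ (θ₂ - 1) * x ^ κ₂)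
        + b * ρ * (1 - σ) * y ^ ρ + ρ * η₂ * y ^ (ρ + θ₂ - 1) * x ^ κ₂ := by
  have hneg : η₂ * y ^ (θ₂ - 1) * x ^ κ₂ ≤ η₂ * x ^ (κ₂ - β * (1 - θ₂)) := by
    rw [mul_assoc]
    gcongr
    have h := rpow_mul_rpow_le_of_rpow_le (κ := κ₂) hx hxy (sub_nonpos.mpr hθ₂)
    rwa [show κ₂ + β * (θ₂ - 1) = κ₂ - β * (1 - θ₂) by ring] at h
  have hbracket : 0 < β * a * (1 - σ) - (1 + σ) * b
      + β * η₁ * x ^ (θ₁ - 1) * y ^ κ₁ - η₂ * y ^ (θ₂ - 1) * x ^ κ₂ := by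
    have : 0 ≤ β * η₁ * x ^ (θ₁ - 1) * y ^ κ₁ := by positivity
    linarith
  have : 0 ≤ 1 - σ := sub_nonneg.mpr hσ
  positivity

theorem Htilde_pos_case_iib_general (a b η₁ η₂ κ₁ κ₂ p q θ₁ θ₂ : ℝ)
    (ha : 0 < a) (hb : 0 < b) (hη₁ : 0 < η₁) (hη₂ : 0 < η₂)
    (hθ₂' : θ₂ < 1)
    (hp0 : p = 0) (hq0 : q = 0) (hcond : b / a < κ₂ / (1 - θ₂)) :
    ∃ β ρ σ₀ ε₀ zstar δ : ℝ,
      0 < β ∧ 0 < ρ ∧ 0 < σ₀ ∧ 0 < ε₀ ∧ 0 < zstar ∧ 0 < δ ∧ δ < β⁻¹ ∧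
      ∀ σ : ℝ, 0 < σ → σ < σ₀ → ∀ x y : ℝ,
        0 < x → x ≤ ε₀ → 0 < y → y ≤ ε₀ → y * x ^ (-β) ≥ zstar →
        0 < δ * (x ^ (β * δ) * y ^ (-δ)) *
              (β * a * (1 - σ) * x ^ p - (1 + σ) * b * y ^ q
                + β * η₁ * x ^ (θ₁ - 1) * y ^ κ₁ - η₂ * y ^ (θ₂ - 1) * x ^ κ₂)
            + b * ρ * (1 - σ) * y ^ (ρ + q) + ρ * η₂ * y ^ (ρ + θ₂ - 1) * x ^ κ₂ := by
  subst hp0 hq0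
  simp only [rpow_zero, mul_one, add_zero]
  obtain ⟨β, hβa, hβκ⟩ := exists_between hcond
  have hβ : 0 < β := (div_pos hb ha).trans hβa
  have hc : b < β * a := (div_lt_iff₀ ha).mp hβa
  have hγ : 0 < κ₂ - β * (1 - θ₂) := by
    have := (lt_div_iff₀ (sub_pos.mpr hθ₂')).mp hβκ
    linarith
  have hc2 : 0 < (β * a - b) / (2 * η₂) := div_pos (by linarith) (by positivity)
  refine ⟨β, 1, (β * a - b) / (2 * (β * a + b)), ((β * a - b) / (2 * η₂)) ^ (κ₂ - β * (1 - θ₂))⁻¹,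
    1, (2 * β)⁻¹, hβ, one_pos, div_pos (by linarith) (by positivity), rpow_pos_of_pos hc2 _,
    one_pos, by positivity, by rw [inv_lt_inv₀ (by positivity) hβ]; linarith, ?_⟩
  intro σ _ hσ x y hx hxε hy _ hz
  obtain ⟨hσ1, hσgap⟩ := half_gap_lt_of_lt hb hc hσ
  have hxγ : x ^ (κ₂ - β * (1 - θ₂)) ≤ (β * a - b) / (2 * η₂) :=
    (le_rpow_inv_iff_of_pos hx.le hc2.le hγ).mp hxε
  refine Htilde_pos_of_gap hb.le hη₁.le hη₂.le hβ.le zero_le_one (by positivity) hθ₂'.le hσ1.le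
    hx hy (rpow_le_of_one_le_mul_rpow_neg hx hz) ?_
  calc η₂ * x ^ (κ₂ - β * (1 - θ₂)) ≤ η₂ * ((β * a - b) / (2 * η₂)) := by gcongr
    _ = (β * a - b) / 2 := by field_simp
    _ < _ := hσgap

/-- Lemma 3.11 (case (iib)): there exist `β, ρ, σ₀, ε₀, z* > 0` and `0 < δ < β⁻¹`
such that for all `0 < σ < σ₀`, `0 < x, y ≤ ε₀` with `y x^(−β) ≥ z*`, one has
`H̃_σ(x,y) := δ x^(βδ) y^(−δ) [βa(1−σ)x^p − (1+σ)b y^q + βη₁ x^(θ₁−1) y^(κ₁)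
  − η₂ y^(θ₂−1) x^(κ₂)] + bρ(1−σ) y^(ρ+q) + ρη₂ y^(ρ+θ₂−1) x^(κ₂) > 0`. -/
theorem Htilde_pos_case_iib (a b η₁ η₂ κ₁ κ₂ p q θ₁ θ₂ : ℝ)
    (ha : 0 < a) (hb : 0 < b) (hη₁ : 0 < η₁) (hη₂ : 0 < η₂)
    (hκ₁ : 0 < κ₁) (hκ₂ : 0 < κ₂) (hp : 0 ≤ p) (hq : 0 ≤ q)
    (hθ₁ : 1 ≤ θ₁) (hθ₂ : 0 ≤ θ₂) (hθ₂' : θ₂ < 1)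
    (hp0 : p = 0) (hq0 : q = 0) (hcond : b / a < κ₂ / (1 - θ₂)) :
    ∃ β ρ σ₀ ε₀ zstar δ : ℝ,
      0 < β ∧ 0 < ρ ∧ 0 < σ₀ ∧ 0 < ε₀ ∧ 0 < zstar ∧ 0 < δ ∧ δ < β⁻¹ ∧
      ∀ σ : ℝ, 0 < σ → σ < σ₀ → ∀ x y : ℝ,
        0 < x → x ≤ ε₀ → 0 < y → y ≤ ε₀ → y * x ^ (-β) ≥ zstar →
        0 < δ * (x ^ (β * δ) * y ^ (-δ)) *
              (β * a * (1 - σ) * x ^ p - (1 + σ) * b * y ^ q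
                + β * η₁ * x ^ (θ₁ - 1) * y ^ κ₁ - η₂ * y ^ (θ₂ - 1) * x ^ κ₂)
            + b * ρ * (1 - σ) * y ^ (ρ + q) + ρ * η₂ * y ^ (ρ + θ₂ - 1) * x ^ κ₂ :=
  Htilde_pos_case_iib_general a b η₁ η₂ κ₁ κ₂ p q θ₁ θ₂ ha hb hη₁ hη₂ hθ₂' hp0 hq0 hcond
end
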